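/- arXiv:1812.03733 — 2 statements merged into one kernel-verified Lean document; each statement's English description precedes it below -/
import Mathlib

section
/- If N is a geometric random variable with success probability ε ∈ (0,1], independent of an i.i.d. sequence of nonnegative random variables (ξ_i) each satisfying P(ξ_i > n) ≤ C/√n for all n ≥ 1, then the random sum S = ξ_1 + ... + ξ_N satisfies P(S > n) ≤ C'/√n for all n ≥ 1, for some constant C' depending only on C and ε. -/
open MeasureTheory ProbabilityTheory

private lemma geomSumAux (x : ℝ) (n : ℕ) :
    ∑ i ∈ Finset.range n, (1 - x) * x ^ i = 1 - x ^ n := by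
  induction n with
  | zero => simp
  | succ n ih => rw [Finset.sum_range_succ, ih]; ring

private lemma pow_tail_bound (x : ℝ) (h0 : 0 ≤ x) (h1 : x ≤ 1) (n : ℕ) :
    (n : ℝ) * ((1 - x) * x ^ n) ≤ 1 := by
  have key : (n : ℝ) * ((1 - x) * x ^ n) ≤ ∑ i ∈ Finset.range n, (1 - x) * x ^ i := by
    have : (n : ℝ) * ((1 - x) * x ^ n) = ∑ _i ∈ Finset.range n, (1 - x) * x ^ n := by
      rw [Finset.sum_const, Finset.card_range, nsmul_eq_mul]
    rw [this]
    refine Finset.sum_le_sum fun i hi => ?_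
    have hi' : i ≤ n := (Finset.mem_range.1 hi).le
    exact mul_le_mul_of_nonneg_left (pow_le_pow_of_le_one h0 h1 hi') (by linarith)
  rw [geomSumAux] at key
  nlinarith [pow_nonneg h0 n]

/-- A geometric sum of i.i.d. nonnegative random variables with tails bounded by `C/√n`
again has tails bounded by `C'/√n`, where the geometric number `N` of summands
(success probability `ε`) is independent of the sequence. -/
theorem stmt2 {Ω : Type*} [MeasurableSpace Ω] (μ : Measure Ω) [IsProbabilityMeasure μ]
    (ε C : ℝ) (hε : 0 < ε) (hε1 : ε ≤ 1)
    (N : Ω → ℕ) (ξ : ℕ → Ω → ℝ)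
    (hNmeas : Measurable N) (hξmeas : ∀ i, Measurable (ξ i))
    (hN1 : ∀ ω, 1 ≤ N ω)
    (hnonneg : ∀ i ω, 0 ≤ ξ i ω)
    (hiid : iIndepFun ξ μ)
    (hident : ∀ i, IdentDistrib (ξ i) (ξ 0) μ μ)
    (hindep : IndepFun N (fun ω i => ξ i ω) μ)
    (hgeom : ∀ k : ℕ, 1 ≤ k → (μ {ω | N ω = k}).toReal = ε * (1 - ε) ^ (k - 1))
    (htail : ∀ i, ∀ n : ℕ, 1 ≤ n → (μ {ω | (n : ℝ) < ξ i ω}).toReal ≤ C / Real.sqrt n) :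
    ∃ C' : ℝ, ∀ n : ℕ, 1 ≤ n →
      (μ {ω | (n : ℝ) < ∑ i ∈ Finset.range (N ω), ξ i ω}).toReal ≤ C' / Real.sqrt n := by
  have hC : 0 ≤ C := by
    have := htail 0 1 le_rfl
    simp only [Nat.cast_one, Real.sqrt_one, div_one] at this
    exact le_trans ENNReal.toReal_nonneg this
  set x : ℝ := 1 - ε with hxdef
  have hx0 : 0 ≤ x := by simp [hxdef]; linarith
  have hx1 : x < 1 := by simp [hxdef]; linarith
  have hnorm : ‖x‖ < 1 := by rw [Real.norm_eq_abs, abs_of_nonneg hx0]; exact hx1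
  -- summability of (j+1)^2 x^j
  have h2 := summable_pow_mul_geometric_of_norm_lt_one (R := ℝ) 2 hnorm
  have h1 := summable_pow_mul_geometric_of_norm_lt_one (R := ℝ) 1 hnorm
  have h0 := summable_pow_mul_geometric_of_norm_lt_one (R := ℝ) 0 hnorm
  have hsum : Summable (fun j : ℕ => ((j : ℝ) + 1) ^ 2 * x ^ j) := by
    refine ((h2.add (h1.mul_left 2)).add h0).congr fun j => ?_
    push_cast; ring
  set T : ℝ := ∑' j : ℕ, ((j : ℝ) + 1) ^ 2 * x ^ j with hTdef
  refine ⟨C * Real.sqrt 2 * T + 1 / ε, fun n hn => ?_⟩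
  have hn0 : (0 : ℝ) < n := by exact_mod_cast hn
  have hsn : (0 : ℝ) < Real.sqrt n := Real.sqrt_pos.2 hn0
  -- per-k bound on the sum of k variables
  have hBk : ∀ k : ℕ, 1 ≤ k → k ≤ n →
      (μ {ω | (n : ℝ) < ∑ i ∈ Finset.range k, ξ i ω}).toReal
        ≤ C * Real.sqrt 2 * (k : ℝ) ^ 2 / Real.sqrt n := by
    intro k hk1 hkn
    set m : ℕ := n / k with hmdef
    have hk0 : 0 < k := hk1
    have hm1 : 1 ≤ m := (Nat.one_le_div_iff hk0).2 hkn
    have hsub : {ω | (n : ℝ) < ∑ i ∈ Finset.range k, ξ i ω}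
        ⊆ ⋃ i ∈ Finset.range k, {ω | (m : ℝ) < ξ i ω} := by
      intro ω hω
      by_contra hcon
      simp only [Set.mem_iUnion, Set.mem_setOf_eq, not_exists, not_lt] at hcon
      have hb : ∑ i ∈ Finset.range k, ξ i ω ≤ (k : ℝ) * m := by
        calc ∑ i ∈ Finset.range k, ξ i ω ≤ ∑ _i ∈ Finset.range k, (m : ℝ) :=
              Finset.sum_le_sum fun i hi => hcon i hi
          _ = (k : ℝ) * m := by rw [Finset.sum_const, Finset.card_range, nsmul_eq_mul]
      have hkm : (k : ℝ) * m ≤ n := by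
        have : k * m ≤ n := by rw [hmdef, mul_comm]; exact Nat.div_mul_le_self n k
        exact_mod_cast this
      exact absurd hω (not_lt.2 (hb.trans hkm))
    have hmeasle := (measure_mono (μ := μ) hsub).trans (measure_biUnion_finset_le _ _)
    have hfin : (∑ i ∈ Finset.range k, μ {ω | (m : ℝ) < ξ i ω}) ≠ ⊤ :=
      ENNReal.sum_ne_top.2 fun i _ => measure_ne_top μ _
    have step1 : (μ {ω | (n : ℝ) < ∑ i ∈ Finset.range k, ξ i ω}).toReal
        ≤ ∑ i ∈ Finset.range k, (μ {ω | (m : ℝ) < ξ i ω}).toReal := by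
      rw [← ENNReal.toReal_sum fun i _ => measure_ne_top μ _]
      exact ENNReal.toReal_mono hfin hmeasle
    -- each term ≤ C/√m ≤ C√2√k/√n
    have hm0 : (0 : ℝ) < m := by exact_mod_cast hm1
    have hsm : (0 : ℝ) < Real.sqrt m := Real.sqrt_pos.2 hm0
    have hk1R : (1 : ℝ) ≤ (k : ℝ) := by exact_mod_cast hk1
    have hnlt : (n : ℝ) ≤ 2 * k * m := by
      have h1 : k * m + n % k = n := by rw [hmdef]; exact Nat.div_add_mod n k
      have h2 : n % k < k := Nat.mod_lt _ hk0
      have h4 : k ≤ k * m := Nat.le_mul_of_pos_right k hm1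
      have h5 : n ≤ 2 * (k * m) := by omega
      have h6 : (n : ℝ) ≤ 2 * ((k : ℝ) * m) := by exact_mod_cast h5
      linarith
    have hsqn : Real.sqrt n ≤ Real.sqrt 2 * Real.sqrt k * Real.sqrt m := by
      calc Real.sqrt n ≤ Real.sqrt (2 * k * m) := Real.sqrt_le_sqrt hnlt
        _ = Real.sqrt 2 * Real.sqrt k * Real.sqrt m := by
            rw [Real.sqrt_mul (by positivity), Real.sqrt_mul (by norm_num)]
    have hterm : C / Real.sqrt m ≤ C * Real.sqrt 2 * Real.sqrt k / Real.sqrt n := by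
      rw [div_le_div_iff₀ hsm hsn]
      calc C * Real.sqrt n ≤ C * (Real.sqrt 2 * Real.sqrt k * Real.sqrt m) :=
            mul_le_mul_of_nonneg_left hsqn hC
        _ = C * Real.sqrt 2 * Real.sqrt k * Real.sqrt m := by ring
    have hsk : Real.sqrt k ≤ (k : ℝ) := by
      have : Real.sqrt k ≤ Real.sqrt ((k : ℝ) ^ 2) := by
        apply Real.sqrt_le_sqrt; nlinarith
      rwa [Real.sqrt_sq (by positivity)] at this
    calc (μ {ω | (n : ℝ) < ∑ i ∈ Finset.range k, ξ i ω}).toReal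
        ≤ ∑ i ∈ Finset.range k, (μ {ω | (m : ℝ) < ξ i ω}).toReal := step1
      _ ≤ ∑ _i ∈ Finset.range k, C / Real.sqrt m :=
          Finset.sum_le_sum fun i _ => htail i m hm1
      _ = (k : ℝ) * (C / Real.sqrt m) := by
          rw [Finset.sum_const, Finset.card_range, nsmul_eq_mul]
      _ ≤ (k : ℝ) * (C * Real.sqrt 2 * Real.sqrt k / Real.sqrt n) :=
          mul_le_mul_of_nonneg_left hterm (by positivity)
      _ ≤ C * Real.sqrt 2 * (k : ℝ) ^ 2 / Real.sqrt n := by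
          rw [mul_div_assoc']
          have hnum : (k : ℝ) * (C * Real.sqrt 2 * Real.sqrt k) ≤ C * Real.sqrt 2 * (k : ℝ) ^ 2 := by
            have h := mul_le_mul_of_nonneg_left hsk
              (by positivity : (0:ℝ) ≤ C * Real.sqrt 2 * k)
            nlinarith [h]
          exact (div_le_div_iff_of_pos_right hsn).2 hnum
  -- independence: product formula
  have hA_meas : ∀ k : ℕ, MeasurableSet {ω | N ω = k} := fun k =>
    hNmeas (measurableSet_singleton k)
  have hABmul : ∀ k : ℕ,
      μ ({ω | N ω = k} ∩ {ω | (n : ℝ) < ∑ i ∈ Finset.range k, ξ i ω})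
        = μ {ω | N ω = k} * μ {ω | (n : ℝ) < ∑ i ∈ Finset.range k, ξ i ω} := by
    intro k
    have hBmeas : MeasurableSet {f : ℕ → ℝ | (n : ℝ) < ∑ i ∈ Finset.range k, f i} :=
      measurableSet_lt measurable_const (Finset.measurable_sum _ fun i _ => measurable_pi_apply i)
    have e1 : {ω | N ω = k} = N ⁻¹' {k} := rfl
    have e2 : {ω | (n : ℝ) < ∑ i ∈ Finset.range k, ξ i ω}
        = (fun ω i => ξ i ω) ⁻¹' {f : ℕ → ℝ | (n : ℝ) < ∑ i ∈ Finset.range k, f i} := rfl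
    rw [e1, e2]
    exact hindep.measure_inter_preimage_eq_mul _ _ (measurableSet_singleton k) hBmeas
  -- decomposition over the value of N
  have hsubmain : {ω | (n : ℝ) < ∑ i ∈ Finset.range (N ω), ξ i ω}
      ⊆ (⋃ k ∈ Finset.Icc 1 n,
          ({ω | N ω = k} ∩ {ω | (n : ℝ) < ∑ i ∈ Finset.range k, ξ i ω}))
        ∪ {ω | n < N ω} := by
    intro ω hω
    by_cases h : N ω ≤ n
    · exact Or.inl (Set.mem_biUnion (Finset.mem_Icc.2 ⟨hN1 ω, h⟩) ⟨rfl, hω⟩)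
    · exact Or.inr (by simpa using Nat.lt_of_not_le h)
  have hchain : μ {ω | (n : ℝ) < ∑ i ∈ Finset.range (N ω), ξ i ω}
      ≤ ∑ k ∈ Finset.Icc 1 n,
          μ ({ω | N ω = k} ∩ {ω | (n : ℝ) < ∑ i ∈ Finset.range k, ξ i ω})
        + μ {ω | n < N ω} :=
    (measure_mono hsubmain).trans ((measure_union_le _ _).trans
      (add_le_add_left (measure_biUnion_finset_le _ _) _))
  have hrhs_ne : (∑ k ∈ Finset.Icc 1 n,
      μ ({ω | N ω = k} ∩ {ω | (n : ℝ) < ∑ i ∈ Finset.range k, ξ i ω}))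
        + μ {ω | n < N ω} ≠ ⊤ :=
    ENNReal.add_ne_top.2 ⟨ENNReal.sum_ne_top.2 fun _ _ => measure_ne_top μ _,
      measure_ne_top μ _⟩
  have key : (μ {ω | (n : ℝ) < ∑ i ∈ Finset.range (N ω), ξ i ω}).toReal
      ≤ ∑ k ∈ Finset.Icc 1 n,
          (μ ({ω | N ω = k} ∩ {ω | (n : ℝ) < ∑ i ∈ Finset.range k, ξ i ω})).toReal
        + (μ {ω | n < N ω}).toReal := by
    have h := ENNReal.toReal_mono hrhs_ne hchain
    rwa [ENNReal.toReal_add (ENNReal.sum_ne_top.2 fun _ _ => measure_ne_top μ _)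
      (measure_ne_top μ _), ENNReal.toReal_sum (fun _ _ => measure_ne_top μ _)] at h
  -- tail of N
  have hd : (↑(Finset.Icc 1 n) : Set ℕ).PairwiseDisjoint (fun k => {ω | N ω = k}) := by
    intro a _ b _ hab
    refine Set.disjoint_left.2 fun ω h1 h2 => hab ?_
    exact (h1 : N ω = a).symm.trans h2
  have hUmeas : MeasurableSet (⋃ k ∈ Finset.Icc 1 n, {ω | N ω = k}) :=
    (Finset.Icc 1 n).measurableSet_biUnion fun k _ => hA_meas k
  have hgeomsum : ∑ k ∈ Finset.Icc 1 n, ε * x ^ (k - 1) = 1 - x ^ n := by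
    calc ∑ k ∈ Finset.Icc 1 n, ε * x ^ (k - 1)
        = ∑ j ∈ Finset.range n, (1 - x) * x ^ j := by
          rw [← Finset.Ico_add_one_right_eq_Icc, Finset.sum_Ico_eq_sum_range]
          refine Finset.sum_congr (by simp) fun j _ => ?_
          have h1 : (1 : ℕ) + j - 1 = j := by omega
          have h2 : 1 - x = ε := by simp [hxdef]
          rw [h1, h2]
      _ = 1 - x ^ n := geomSumAux x n
  have hU : (μ (⋃ k ∈ Finset.Icc 1 n, {ω | N ω = k})).toReal = 1 - x ^ n := by
    rw [measure_biUnion_finset hd fun k _ => hA_meas k,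
      ENNReal.toReal_sum (fun _ _ => measure_ne_top μ _)]
    rw [Finset.sum_congr rfl fun k hk => hgeom k (Finset.mem_Icc.1 hk).1]
    exact hgeomsum
  have hUc : {ω | n < N ω} = (⋃ k ∈ Finset.Icc 1 n, {ω | N ω = k})ᶜ := by
    ext ω
    simp only [Set.mem_setOf_eq, Set.compl_iUnion, Set.mem_iInter, Set.mem_compl_iff,
      Finset.mem_Icc]
    constructor
    · intro h k hk hNk; omega
    · intro h
      by_contra hcon
      push_neg at hcon
      exact h (N ω) ⟨hN1 ω, by omega⟩ rfl
  have htailval : (μ {ω | n < N ω}).toReal = x ^ n := by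
    rw [hUc, prob_compl_eq_one_sub hUmeas,
      ENNReal.toReal_sub_of_le prob_le_one ENNReal.one_ne_top, ENNReal.toReal_one, hU]
    ring
  have hn1R : (1 : ℝ) ≤ (n : ℝ) := by exact_mod_cast hn
  have hsl : Real.sqrt n ≤ (n : ℝ) := by
    have : Real.sqrt n ≤ Real.sqrt ((n : ℝ) ^ 2) := by
      apply Real.sqrt_le_sqrt; nlinarith
    rwa [Real.sqrt_sq (by positivity)] at this
  have hxn_le : x ^ n ≤ (1 / ε) / Real.sqrt n := by
    have hpt := pow_tail_bound x hx0 hx1.le n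
    have h1x : 1 - x = ε := by simp [hxdef]
    rw [h1x] at hpt
    rw [div_div, le_div_iff₀ (by positivity)]
    nlinarith [mul_le_mul_of_nonneg_left hsl (mul_nonneg (pow_nonneg hx0 n) hε.le), hpt]
  -- bound the series
  have hSle : ∑ k ∈ Finset.Icc 1 n, ε * x ^ (k - 1) * ((k : ℝ)) ^ 2 ≤ T := by
    calc ∑ k ∈ Finset.Icc 1 n, ε * x ^ (k - 1) * ((k : ℝ)) ^ 2
        = ∑ j ∈ Finset.range n, ε * x ^ j * (((1 + j : ℕ) : ℝ)) ^ 2 := by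
          rw [← Finset.Ico_add_one_right_eq_Icc, Finset.sum_Ico_eq_sum_range]
          refine Finset.sum_congr (by simp) fun j _ => ?_
          have h1 : (1 : ℕ) + j - 1 = j := by omega
          rw [h1]
      _ ≤ ∑ j ∈ Finset.range n, ((j : ℝ) + 1) ^ 2 * x ^ j := by
          refine Finset.sum_le_sum fun j _ => ?_
          push_cast
          nlinarith [mul_nonneg (mul_nonneg (by linarith : (0:ℝ) ≤ 1 - ε)
            (pow_nonneg hx0 j)) (sq_nonneg ((j : ℝ) + 1))]
      _ ≤ T := Summable.sum_le_tsum _ (fun j _ => by positivity) hsum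
  -- combine everything
  calc (μ {ω | (n : ℝ) < ∑ i ∈ Finset.range (N ω), ξ i ω}).toReal
      ≤ ∑ k ∈ Finset.Icc 1 n,
          (μ ({ω | N ω = k} ∩ {ω | (n : ℝ) < ∑ i ∈ Finset.range k, ξ i ω})).toReal
        + (μ {ω | n < N ω}).toReal := key
    _ ≤ ∑ k ∈ Finset.Icc 1 n,
          (ε * x ^ (k - 1) * (C * Real.sqrt 2 * (k : ℝ) ^ 2 / Real.sqrt n)) + x ^ n := by
        refine add_le_add (Finset.sum_le_sum fun k hk => ?_) (le_of_eq htailval)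
        obtain ⟨hk1, hkn⟩ := Finset.mem_Icc.1 hk
        rw [hABmul k, ENNReal.toReal_mul, hgeom k hk1]
        exact mul_le_mul_of_nonneg_left (hBk k hk1 hkn)
          (mul_nonneg hε.le (pow_nonneg hx0 _))
    _ = (C * Real.sqrt 2 / Real.sqrt n)
          * ∑ k ∈ Finset.Icc 1 n, ε * x ^ (k - 1) * ((k : ℝ)) ^ 2 + x ^ n := by
        rw [Finset.mul_sum]
        congr 1
        exact Finset.sum_congr rfl fun k _ => by ring
    _ ≤ (C * Real.sqrt 2 / Real.sqrt n) * T + (1 / ε) / Real.sqrt n := by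
        refine add_le_add (mul_le_mul_of_nonneg_left hSle (by positivity)) hxn_le
    _ = (C * Real.sqrt 2 * T + 1 / ε) / Real.sqrt n := by
        field_simp
end

section
/- Let D be a Markov chain on ℤ with transition kernel Ψ satisfying: (i) there exists x₀ such that for |x| > x₀, |E[D_{n+1} − x | D_n = x]| ≤ C e^{−c|x|}, (ii) Var[D_{n+1} | D_n = x] ≥ σ̃² > 0 for |x| > x₀, and (iii) Ψ(x,y) ≤ C e^{−c|y−x|}. Then the function f(x) = ∫₀^{|x|} exp((2/c₁)e^{−c₁ y}) dy, for c₁ > 0 small enough and x₀ large enough, is superharmonic for Ψ outside [−x₀, x₀]: Σ_y Ψ(x,y)(f(y) − f(x)) ≤ 0 for all |x| > x₀. -/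
open Real

namespace S17


noncomputable def g (c₁ s : ℝ) : ℝ := Real.exp ((2 / c₁) * Real.exp (-c₁ * s))

noncomputable def f (c₁ t : ℝ) : ℝ := ∫ s in (0:ℝ)..t, g c₁ s

lemma g_cont (c₁ : ℝ) : Continuous (g c₁) := by
  unfold g; continuity

lemma g_pos (c₁ s : ℝ) : 0 < g c₁ s := Real.exp_pos _

lemma one_le_g (c₁ : ℝ) (hc₁ : 0 < c₁) (s : ℝ) : 1 ≤ g c₁ s := by
  rw [show (1:ℝ) = Real.exp 0 by simp]
  exact Real.exp_le_exp.2 (by positivity)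

lemma g_le_M (c₁ : ℝ) (hc₁ : 0 < c₁) {s : ℝ} (hs : 0 ≤ s) :
    g c₁ s ≤ Real.exp (2 / c₁) := by
  apply Real.exp_le_exp.2
  have h1 : Real.exp (-c₁ * s) ≤ 1 := Real.exp_le_one_iff.2 (by nlinarith)
  have h2 : 0 ≤ 2 / c₁ := by positivity
  nlinarith

lemma g_hasDeriv (c₁ : ℝ) (s : ℝ) :
    HasDerivAt (g c₁) (-2 * Real.exp (-c₁ * s) * g c₁ s * (c₁ / c₁)) s := by
  have h1 : HasDerivAt (fun u : ℝ => -c₁ * u) (-c₁) s := by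
    simpa using (hasDerivAt_id s).const_mul (-c₁)
  have h2 : HasDerivAt (fun u : ℝ => (2 / c₁) * Real.exp (-c₁ * u))
      ((2 / c₁) * (Real.exp (-c₁ * s) * (-c₁))) s := ((h1.exp).const_mul _)
  have h3 := h2.exp
  convert h3 using 1
  · rfl
  unfold g
  ring

lemma g_deriv (c₁ : ℝ) (hc₁ : 0 < c₁) (s : ℝ) :
    HasDerivAt (g c₁) (-2 * Real.exp (-c₁ * s) * g c₁ s) s := by
  have := g_hasDeriv c₁ s
  rw [div_self hc₁.ne'] at this
  simpa using this

lemma f_hasDeriv (c₁ : ℝ) (t : ℝ) : HasDerivAt (f c₁) (g c₁ t) t := by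
  exact intervalIntegral.integral_hasDerivAt_right
    ((g_cont c₁).intervalIntegrable _ _)
    ((g_cont c₁).stronglyMeasurableAtFilter _ _)
    (g_cont c₁).continuousAt

/-- The function `ψ s = g s + 2 e^{-c₁ B} s` is antitone on `[0, B]`. -/
lemma psi_antitone (c₁ B : ℝ) (hc₁ : 0 < c₁) :
    AntitoneOn (fun s => g c₁ s + 2 * Real.exp (-c₁ * B) * s) (Set.Icc 0 B) := by
  apply antitoneOn_of_deriv_nonpos (convex_Icc 0 B)
  · exact ((g_cont c₁).add (by continuity)).continuousOn
  · intro s hs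
    exact (((g_deriv c₁ hc₁ s).add
      (by simpa using (hasDerivAt_id s).const_mul (2 * Real.exp (-c₁ * B)) :
        HasDerivAt (fun u : ℝ => 2 * Real.exp (-c₁ * B) * u) (2 * Real.exp (-c₁ * B)) s)).differentiableAt).differentiableWithinAt
  · intro s hs
    rw [interior_Icc] at hs
    have hd := ((g_deriv c₁ hc₁ s).add
      (by simpa using (hasDerivAt_id s).const_mul (2 * Real.exp (-c₁ * B)) :
        HasDerivAt (fun u : ℝ => 2 * Real.exp (-c₁ * B) * u) (2 * Real.exp (-c₁ * B)) s)).deriv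
    rw [show (fun s => g c₁ s + 2 * Real.exp (-c₁ * B) * s) = (g c₁ + fun u => 2 * Real.exp (-c₁ * B) * u) from rfl, hd]
    have h1 : Real.exp (-c₁ * B) ≤ Real.exp (-c₁ * s) :=
      Real.exp_le_exp.2 (by nlinarith [hs.2])
    have h2 : 1 ≤ g c₁ s := one_le_g c₁ hc₁ s
    nlinarith [Real.exp_pos (-c₁ * s)]

/-- Second-order Taylor-type bound: on `[0,B]`,
`f y − f x ≤ g x (y−x) − e^{-c₁ B} (y−x)²`. -/
lemma taylor_bound (c₁ B : ℝ) (hc₁ : 0 < c₁) {x y : ℝ}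
    (hx : x ∈ Set.Icc (0:ℝ) B) (hy : y ∈ Set.Icc (0:ℝ) B) :
    f c₁ y - f c₁ x ≤ g c₁ x * (y - x) - Real.exp (-c₁ * B) * (y - x) ^ 2 := by
  set κ := Real.exp (-c₁ * B) with hκ
  set φ : ℝ → ℝ := fun t => f c₁ t - f c₁ x - g c₁ x * (t - x) + κ * (t - x) ^ 2 with hφ
  have hφd : ∀ t : ℝ, HasDerivAt φ
      (g c₁ t - g c₁ x + κ * (2 * (t - x))) t := by
    intro t
    have h1 : HasDerivAt (fun t : ℝ => g c₁ x * (t - x)) (g c₁ x) t := by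
      simpa using ((hasDerivAt_id t).sub_const x).const_mul (g c₁ x)
    have h2 : HasDerivAt (fun t : ℝ => κ * (t - x) ^ 2) (κ * (2 * (t - x))) t := by
      have := (((hasDerivAt_id t).sub_const x).pow 2).const_mul κ
      simpa using this
    have := (((f_hasDeriv c₁ t).sub_const (f c₁ x)).sub h1).add h2
    exact this
  have hψ := psi_antitone c₁ B hc₁
  have hderiv_eq : ∀ t : ℝ, deriv φ t = g c₁ t - g c₁ x + κ * (2 * (t - x)) :=
    fun t => (hφd t).deriv
  have hcont : Continuous φ := by
    have : ∀ t, DifferentiableAt ℝ φ t := fun t => (hφd t).differentiableAt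
    exact continuous_iff_continuousAt.2 fun t => (this t).continuousAt
  have hφx : φ x = 0 := by simp [hφ]
  rcases le_total x y with hxy | hxy
  · -- φ antitone on [x, B]
    have hanti : AntitoneOn φ (Set.Icc x B) := by
      apply antitoneOn_of_deriv_nonpos (convex_Icc x B) hcont.continuousOn
      · exact fun t _ => ((hφd t).differentiableAt).differentiableWithinAt
      · intro t ht
        rw [interior_Icc] at ht
        rw [hderiv_eq]
        have h1 : (fun s => g c₁ s + 2 * κ * s) t ≤ (fun s => g c₁ s + 2 * κ * s) x := by
          apply hψ ⟨hx.1, hx.2⟩ ⟨le_trans hx.1 (le_of_lt ht.1), le_of_lt ht.2⟩ (le_of_lt ht.1)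
        simp only at h1
        nlinarith
    have := hanti (Set.mem_Icc.2 ⟨le_refl x, hx.2⟩) (Set.mem_Icc.2 ⟨hxy, hy.2⟩) hxy
    rw [hφx] at this
    simp only [hφ] at this
    linarith
  · -- φ monotone on [0, x]
    have hmono : MonotoneOn φ (Set.Icc 0 x) := by
      apply monotoneOn_of_deriv_nonneg (convex_Icc 0 x) hcont.continuousOn
      · exact fun t _ => ((hφd t).differentiableAt).differentiableWithinAt
      · intro t ht
        rw [interior_Icc] at ht
        rw [hderiv_eq]
        have h1 : (fun s => g c₁ s + 2 * κ * s) x ≤ (fun s => g c₁ s + 2 * κ * s) t := by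
          apply hψ ⟨le_of_lt ht.1, le_trans (le_of_lt ht.2) hx.2⟩ ⟨hx.1, hx.2⟩ (le_of_lt ht.2)
        simp only at h1
        nlinarith
    have := hmono (Set.mem_Icc.2 ⟨hy.1, hxy⟩) (Set.mem_Icc.2 ⟨hx.1, le_refl x⟩) hxy
    rw [hφx] at this
    simp only [hφ] at this
    linarith

lemma f_nonneg (c₁ : ℝ) {t : ℝ} (ht : 0 ≤ t) : 0 ≤ f c₁ t := by
  exact intervalIntegral.integral_nonneg ht (fun s _ => (g_pos c₁ s).le)

lemma f_le (c₁ : ℝ) (hc₁ : 0 < c₁) {t : ℝ} (ht : 0 ≤ t) :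
    f c₁ t ≤ Real.exp (2 / c₁) * t := by
  have := intervalIntegral.integral_mono_on (μ := MeasureTheory.volume) ht
    ((g_cont c₁).intervalIntegrable 0 t)
    ((continuous_const : Continuous (fun _ : ℝ => Real.exp (2 / c₁))).intervalIntegrable 0 t)
    (fun s hs => g_le_M c₁ hc₁ hs.1)
  rw [mul_comm]
  simpa [f] using this



lemma summable_int_exp (a : ℝ) (ha : 0 < a) (n : ℕ) :
    Summable (fun z : ℤ => Real.exp (-a * |(z:ℝ)|) * |(z:ℝ)| ^ n) := by
  have hnat : Summable (fun m : ℕ => Real.exp (-a * (m:ℝ)) * (m:ℝ) ^ n) := by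
    have hr : ‖Real.exp (-a)‖ < 1 := by
      rw [Real.norm_eq_abs, abs_of_pos (Real.exp_pos _)]
      exact Real.exp_lt_one_iff.2 (by linarith)
    have := summable_pow_mul_geometric_of_norm_lt_one n hr
    apply this.congr
    intro m
    rw [← Real.exp_nat_mul]
    ring_nf
  apply Summable.of_nat_of_neg
  · apply hnat.congr; intro m; norm_num
  · apply hnat.congr; intro m
    push_cast
    rw [abs_neg, abs_of_nonneg (by positivity : (0:ℝ) ≤ (m:ℝ))]

lemma summable_shift (a : ℝ) (ha : 0 < a) (n : ℕ) (x : ℤ) :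
    Summable (fun y : ℤ => Real.exp (-a * |(y:ℝ) - (x:ℝ)|) * |(y:ℝ) - (x:ℝ)| ^ n) := by
  have h := summable_int_exp a ha n
  have h2 : Summable ((fun z : ℤ => Real.exp (-a * |(z:ℝ)|) * |(z:ℝ)| ^ n) ∘
      (Equiv.subRight x)) := ((Equiv.subRight x).summable_iff).2 h
  apply h2.congr
  intro y
  simp only [Function.comp, Equiv.subRight_apply]
  push_cast
  ring_nf

lemma tsum_shift (h : ℝ → ℝ) (x : ℤ) :
    ∑' y : ℤ, h ((y:ℝ) - (x:ℝ)) = ∑' z : ℤ, h (z:ℝ) := by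
  rw [← (Equiv.subRight x).tsum_eq (fun z : ℤ => h (z:ℝ))]
  congr 1
  funext y
  simp only [Equiv.subRight_apply]
  push_cast
  ring_nf

lemma exp_small (K a ε : ℝ) (ha : 0 < a) (hε : 0 < ε) :
    ∃ R : ℝ, ∀ t : ℝ, R ≤ t → K * Real.exp (-a * t) ≤ ε := by
  set K' := max K 1 with hK'
  have hK'pos : 0 < K' := lt_of_lt_of_le one_pos (le_max_right _ _)
  refine ⟨-Real.log (ε / K') / a, fun t ht => ?_⟩
  have h1 : -Real.log (ε / K') ≤ a * t := by
    rw [div_le_iff₀ ha] at ht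
    linarith [ht]
  have h2 : Real.exp (-a * t) ≤ ε / K' := by
    rw [← Real.exp_log (show 0 < ε / K' by positivity)]
    apply Real.exp_le_exp.2
    linarith
  calc K * Real.exp (-a * t) ≤ K' * Real.exp (-a * t) := by
        apply mul_le_mul_of_nonneg_right (le_max_left _ _) (Real.exp_pos _).le
    _ ≤ K' * (ε / K') := by
        apply mul_le_mul_of_nonneg_left h2 hK'pos.le
    _ = ε := by field_simp


set_option maxHeartbeats 2000000 in
lemma key (C c σ x₀ : ℝ) (hC : 0 < C) (hc : 0 < c) (hσ : 0 < σ)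
    (Ψ : ℤ → ℤ → ℝ) (hnn : ∀ x y, 0 ≤ Ψ x y) (hstoch : ∀ x, HasSum (Ψ x) 1)
    (hdrift : ∀ x : ℤ, x₀ < |(x : ℝ)| →
      |∑' y : ℤ, Ψ x y * ((y : ℝ) - (x : ℝ))| ≤ C * Real.exp (-c * |(x : ℝ)|))
    (hvar : ∀ x : ℤ, x₀ < |(x : ℝ)| →
      σ ^ 2 ≤ ∑' y : ℤ, Ψ x y * ((y : ℝ) - ∑' z : ℤ, Ψ x z * (z : ℝ)) ^ 2)
    (hjump : ∀ x y : ℤ, Ψ x y ≤ C * Real.exp (-c * |(y : ℝ) - (x : ℝ)|)) :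
    ∃ x₁ : ℝ, (max x₀ 1 ≤ x₁) ∧ ∀ x : ℤ, x₁ < (x : ℝ) →
      ∑' y : ℤ, Ψ x y * (f (c/16) |(y:ℝ)| - f (c/16) |(x:ℝ)|) ≤ 0 := by
  set c₁ := c / 16 with hc₁def
  have hc₁pos : 0 < c₁ := by rw [hc₁def]; positivity
  set M := Real.exp (2 / c₁) with hMdef
  have hM0 : 0 < M := Real.exp_pos _
  -- the constant T
  set T := ∑' z : ℤ, Real.exp (-(c/2) * |(z:ℝ)|) * (5*M*|(z:ℝ)| + (z:ℝ)^2) with hTdef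
  have hTs : Summable (fun z : ℤ =>
      Real.exp (-(c/2) * |(z:ℝ)|) * (5*M*|(z:ℝ)| + (z:ℝ)^2)) := by
    have h1 := (summable_int_exp (c/2) (by positivity) 1).mul_left (5*M)
    have h2 := summable_int_exp (c/2) (by positivity) 2
    apply (h1.add h2).congr
    intro z
    rw [pow_one, sq_abs]
    ring
  have hT0 : 0 ≤ T := by
    rw [hTdef]
    apply tsum_nonneg
    intro z
    have h5 : (0:ℝ) ≤ 5*M*|(z:ℝ)| := by positivity
    have := sq_nonneg ((z:ℝ))
    positivity
  obtain ⟨R, hR⟩ := exp_small (M*C + C*T) (c/12) (σ^2) (by positivity) (by positivity)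
  refine ⟨max (max x₀ 1) R, le_max_left _ _, ?_⟩
  intro x hx
  have hX1 : (1:ℝ) < (x:ℝ) :=
    lt_of_le_of_lt (le_trans (le_max_right x₀ 1) (le_max_left _ R)) hx
  have hX0 : (0:ℝ) < (x:ℝ) := by linarith
  have haX : |(x:ℝ)| = (x:ℝ) := abs_of_pos hX0
  have hxx₀ : x₀ < |(x:ℝ)| := by
    rw [haX]
    exact lt_of_le_of_lt (le_trans (le_max_left x₀ 1) (le_max_left _ R)) hx
  have hXR : R ≤ (x:ℝ) := le_of_lt (lt_of_le_of_lt (le_max_right _ R) hx)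
  simp only [haX]
  have hjump' : ∀ y : ℤ, Ψ x y ≤ C * Real.exp (-c * |(y:ℝ) - (x:ℝ)|) := hjump x
  have Sp : Summable (Ψ x) := (hstoch x).summable
  -- summability facts
  have hs1 : Summable (fun y : ℤ => Ψ x y * ((y:ℝ) - (x:ℝ))) := by
    rw [← summable_abs_iff]
    apply Summable.of_nonneg_of_le (fun y => abs_nonneg _)
      ?_ ((summable_shift c hc 1 x).mul_left C)
    intro y
    rw [abs_mul, abs_of_nonneg (hnn x y), pow_one]
    calc Ψ x y * |(y:ℝ)-(x:ℝ)|
        ≤ (C * Real.exp (-c * |(y:ℝ)-(x:ℝ)|)) * |(y:ℝ)-(x:ℝ)| :=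
          mul_le_mul_of_nonneg_right (hjump' y) (abs_nonneg _)
      _ = C * (Real.exp (-c * |(y:ℝ)-(x:ℝ)|) * |(y:ℝ)-(x:ℝ)|) := by ring
  have hs2 : Summable (fun y : ℤ => Ψ x y * ((y:ℝ) - (x:ℝ))^2) := by
    apply Summable.of_nonneg_of_le
      (fun y => mul_nonneg (hnn x y) (sq_nonneg _))
      ?_ ((summable_shift c hc 2 x).mul_left C)
    intro y
    calc Ψ x y * ((y:ℝ)-(x:ℝ))^2
        ≤ (C * Real.exp (-c * |(y:ℝ)-(x:ℝ)|)) * ((y:ℝ)-(x:ℝ))^2 :=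
          mul_le_mul_of_nonneg_right (hjump' y) (sq_nonneg _)
      _ = C * (Real.exp (-c * |(y:ℝ)-(x:ℝ)|) * |(y:ℝ)-(x:ℝ)|^2) := by
          rw [sq_abs]; ring
  -- bound on the increments of f
  have hΔ : ∀ y : ℤ, |f c₁ |(y:ℝ)| - f c₁ (x:ℝ)| ≤ 2*M*(x:ℝ) + M*|(y:ℝ)-(x:ℝ)| := by
    intro y
    have h1 : 0 ≤ f c₁ |(y:ℝ)| := f_nonneg _ (abs_nonneg _)
    have h2 : f c₁ |(y:ℝ)| ≤ M * |(y:ℝ)| := f_le _ hc₁pos (abs_nonneg _)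
    have h3 : |(y:ℝ)| ≤ (x:ℝ) + |(y:ℝ)-(x:ℝ)| := by
      have := abs_add_le ((y:ℝ)-(x:ℝ)) ((x:ℝ))
      simp only [sub_add_cancel] at this
      rw [haX] at this
      linarith
    have h4 : 0 ≤ f c₁ (x:ℝ) := f_nonneg _ hX0.le
    have h5 : f c₁ (x:ℝ) ≤ M * (x:ℝ) := f_le _ hc₁pos hX0.le
    have h6 := mul_le_mul_of_nonneg_left h3 hM0.le
    have h7 : 0 ≤ M*|(y:ℝ)-(x:ℝ)| := mul_nonneg hM0.le (abs_nonneg _)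
    have h8 : 0 ≤ M*(x:ℝ) := mul_nonneg hM0.le hX0.le
    rw [abs_le]
    constructor <;> nlinarith
  have hsLHS : Summable (fun y : ℤ => Ψ x y * (f c₁ |(y:ℝ)| - f c₁ (x:ℝ))) := by
    rw [← summable_abs_iff]
    apply Summable.of_nonneg_of_le (fun y => abs_nonneg _) ?_
      (((summable_shift c hc 0 x).mul_left (C*(2*M*(x:ℝ)))).add
        ((summable_shift c hc 1 x).mul_left (C*M)))
    intro y
    rw [abs_mul, abs_of_nonneg (hnn x y), pow_zero, pow_one]
    calc Ψ x y * |f c₁ |(y:ℝ)| - f c₁ (x:ℝ)|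
        ≤ Ψ x y * (2*M*(x:ℝ) + M*|(y:ℝ)-(x:ℝ)|) :=
          mul_le_mul_of_nonneg_left (hΔ y) (hnn x y)
      _ ≤ (C * Real.exp (-c * |(y:ℝ)-(x:ℝ)|)) * (2*M*(x:ℝ) + M*|(y:ℝ)-(x:ℝ)|) := by
          apply mul_le_mul_of_nonneg_right (hjump' y)
          have h7 : 0 ≤ M*|(y:ℝ)-(x:ℝ)| := mul_nonneg hM0.le (abs_nonneg _)
          nlinarith
      _ = C*(2*M*(x:ℝ)) * (Real.exp (-c * |(y:ℝ)-(x:ℝ)|) * 1)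
          + C*M * (Real.exp (-c * |(y:ℝ)-(x:ℝ)|) * |(y:ℝ)-(x:ℝ)|) := by ring
  -- the error function E
  set E : ℤ → ℝ := fun y => C * Real.exp (-c*(x:ℝ)/6) *
    (Real.exp (-(c/2) * |(y:ℝ)-(x:ℝ)|) * (5*M*|(y:ℝ)-(x:ℝ)| + ((y:ℝ)-(x:ℝ))^2)) with hE
  have hE0 : ∀ y, 0 ≤ E y := by
    intro y
    simp only [hE]
    have h5 : (0:ℝ) ≤ 5*M*|(y:ℝ)-(x:ℝ)| := by positivity
    have := sq_nonneg ((y:ℝ)-(x:ℝ))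
    positivity
  have hsE : Summable E := by
    apply Summable.mul_left
    have h1 := (summable_shift (c/2) (by positivity) 1 x).mul_left (5*M)
    have h2 := summable_shift (c/2) (by positivity) 2 x
    apply (h1.add h2).congr
    intro y
    rw [pow_one, sq_abs]
    ring
  -- the pointwise bound
  have hpt : ∀ y : ℤ, Ψ x y * (f c₁ |(y:ℝ)| - f c₁ (x:ℝ)) ≤
      g c₁ (x:ℝ) * (Ψ x y * ((y:ℝ)-(x:ℝ)))
      + ((-(Real.exp (-c₁ * (4*(x:ℝ)/3)))) * (Ψ x y * ((y:ℝ)-(x:ℝ))^2) + E y) := by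
    intro y
    rcases le_or_gt (|(y:ℝ)-(x:ℝ)|) ((x:ℝ)/3) with hnear | hfar
    · -- near case
      obtain ⟨hn1, hn2⟩ := abs_le.1 hnear
      have hy0 : (0:ℝ) ≤ (y:ℝ) := by linarith
      have hay : |(y:ℝ)| = (y:ℝ) := abs_of_nonneg hy0
      rw [hay]
      have htb := taylor_bound c₁ (4*(x:ℝ)/3) hc₁pos
        (x := (x:ℝ)) (y := (y:ℝ)) ⟨hX0.le, by linarith⟩ ⟨hy0, by linarith⟩
      have hmul := mul_le_mul_of_nonneg_left htb (hnn x y)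
      have hEy := hE0 y
      have hexp : Ψ x y * (g c₁ (x:ℝ) * ((y:ℝ)-(x:ℝ))
          - Real.exp (-c₁ * (4*(x:ℝ)/3)) * ((y:ℝ)-(x:ℝ))^2)
          = g c₁ (x:ℝ) * (Ψ x y * ((y:ℝ)-(x:ℝ)))
          + (-(Real.exp (-c₁ * (4*(x:ℝ)/3)))) * (Ψ x y * ((y:ℝ)-(x:ℝ))^2) := by ring
      linarith [hmul, hexp ▸ hmul]
    · -- far case
      have hK0 : (0:ℝ) ≤ |(y:ℝ)-(x:ℝ)| := abs_nonneg _
      have hk3 : (x:ℝ) ≤ 3*|(y:ℝ)-(x:ℝ)| := by linarith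
      have hΨb : Ψ x y ≤ C * Real.exp (-c * |(y:ℝ)-(x:ℝ)|) := hjump' y
      have hΨ0 : 0 ≤ Ψ x y := hnn x y
      have h2 : f c₁ |(y:ℝ)| ≤ M * |(y:ℝ)| := f_le _ hc₁pos (abs_nonneg _)
      have h3 : |(y:ℝ)| ≤ (x:ℝ) + |(y:ℝ)-(x:ℝ)| := by
        have := abs_add_le ((y:ℝ)-(x:ℝ)) ((x:ℝ))
        simp only [sub_add_cancel] at this
        rw [haX] at this
        linarith
      have hfy_ub : f c₁ |(y:ℝ)| ≤ M * ((x:ℝ) + |(y:ℝ)-(x:ℝ)|) :=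
        le_trans h2 (mul_le_mul_of_nonneg_left h3 hM0.le)
      have hfy_lb : 0 ≤ f c₁ |(y:ℝ)| := f_nonneg _ (abs_nonneg _)
      have hfx_ub : f c₁ (x:ℝ) ≤ M * (x:ℝ) := f_le _ hc₁pos hX0.le
      have hfx_lb : 0 ≤ f c₁ (x:ℝ) := f_nonneg _ hX0.le
      have hκ1 : Real.exp (-c₁ * (4*(x:ℝ)/3)) ≤ 1 := by
        apply Real.exp_le_one_iff.2
        nlinarith
      have hg0 : 0 < g c₁ (x:ℝ) := g_pos _ _
      have hgM : g c₁ (x:ℝ) ≤ M := g_le_M _ hc₁pos hX0.le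
      -- step A
      have hA1 : Ψ x y * (f c₁ |(y:ℝ)| - f c₁ (x:ℝ))
          ≤ Ψ x y * (M * ((x:ℝ) + |(y:ℝ)-(x:ℝ)|)) :=
        mul_le_mul_of_nonneg_left (by linarith) hΨ0
      have hA2 : -(g c₁ (x:ℝ) * (Ψ x y * ((y:ℝ)-(x:ℝ)))) ≤ M * (Ψ x y * |(y:ℝ)-(x:ℝ)|) := by
        have hnk : -((y:ℝ)-(x:ℝ)) ≤ |(y:ℝ)-(x:ℝ)| := neg_le_abs _
        nlinarith [mul_le_mul_of_nonneg_left hnk (mul_nonneg hg0.le hΨ0),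
          mul_le_mul_of_nonneg_right hgM (mul_nonneg hΨ0 hK0)]
      have hA3 : Real.exp (-c₁ * (4*(x:ℝ)/3)) * (Ψ x y * ((y:ℝ)-(x:ℝ))^2)
          ≤ Ψ x y * ((y:ℝ)-(x:ℝ))^2 := by
        nlinarith [mul_nonneg hΨ0 (sq_nonneg ((y:ℝ)-(x:ℝ)))]
      -- step B
      have hB1 : Ψ x y * (M * ((x:ℝ) + |(y:ℝ)-(x:ℝ)|)) + M * (Ψ x y * |(y:ℝ)-(x:ℝ)|)
          + Ψ x y * ((y:ℝ)-(x:ℝ))^2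
          = Ψ x y * (M * ((x:ℝ) + |(y:ℝ)-(x:ℝ)|) + M * |(y:ℝ)-(x:ℝ)| + ((y:ℝ)-(x:ℝ))^2) := by
        ring
      have hBnn : 0 ≤ M * ((x:ℝ) + |(y:ℝ)-(x:ℝ)|) + M * |(y:ℝ)-(x:ℝ)| + ((y:ℝ)-(x:ℝ))^2 := by
        have := mul_nonneg hM0.le (by linarith : (0:ℝ) ≤ (x:ℝ) + |(y:ℝ)-(x:ℝ)|)
        have := mul_nonneg hM0.le hK0
        have := sq_nonneg ((y:ℝ)-(x:ℝ))
        linarith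
      have hB2 : Ψ x y * (M * ((x:ℝ) + |(y:ℝ)-(x:ℝ)|) + M * |(y:ℝ)-(x:ℝ)| + ((y:ℝ)-(x:ℝ))^2)
          ≤ (C * Real.exp (-c * |(y:ℝ)-(x:ℝ)|)) *
            (M * ((x:ℝ) + |(y:ℝ)-(x:ℝ)|) + M * |(y:ℝ)-(x:ℝ)| + ((y:ℝ)-(x:ℝ))^2) :=
        mul_le_mul_of_nonneg_right hΨb hBnn
      have hB3 : (C * Real.exp (-c * |(y:ℝ)-(x:ℝ)|)) *
            (M * ((x:ℝ) + |(y:ℝ)-(x:ℝ)|) + M * |(y:ℝ)-(x:ℝ)| + ((y:ℝ)-(x:ℝ))^2)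
          ≤ (C * Real.exp (-c * |(y:ℝ)-(x:ℝ)|)) *
            (5*M*|(y:ℝ)-(x:ℝ)| + ((y:ℝ)-(x:ℝ))^2) := by
        apply mul_le_mul_of_nonneg_left _ (by positivity)
        nlinarith
      have hb4 : Real.exp (-c * |(y:ℝ)-(x:ℝ)|)
          = Real.exp (-(c/2) * |(y:ℝ)-(x:ℝ)|) * Real.exp (-(c/2) * |(y:ℝ)-(x:ℝ)|) := by
        rw [← Real.exp_add]
        ring_nf
      have hb5 : Real.exp (-(c/2) * |(y:ℝ)-(x:ℝ)|) ≤ Real.exp (-c*(x:ℝ)/6) := by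
        apply Real.exp_le_exp.2
        nlinarith
      have hinner_nn : 0 ≤ 5*M*|(y:ℝ)-(x:ℝ)| + ((y:ℝ)-(x:ℝ))^2 := by
        have : (0:ℝ) ≤ 5*M*|(y:ℝ)-(x:ℝ)| := by positivity
        nlinarith [sq_nonneg ((y:ℝ)-(x:ℝ))]
      have hB4 : (C * Real.exp (-c * |(y:ℝ)-(x:ℝ)|)) *
            (5*M*|(y:ℝ)-(x:ℝ)| + ((y:ℝ)-(x:ℝ))^2) ≤ E y := by
        rw [hb4]
        have hfac : 0 ≤ C * (5*M*|(y:ℝ)-(x:ℝ)| + ((y:ℝ)-(x:ℝ))^2)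
            * Real.exp (-(c/2) * |(y:ℝ)-(x:ℝ)|) :=
          mul_nonneg (mul_nonneg hC.le hinner_nn) (Real.exp_pos _).le
        calc C * (Real.exp (-(c/2) * |(y:ℝ)-(x:ℝ)|) * Real.exp (-(c/2) * |(y:ℝ)-(x:ℝ)|)) *
              (5*M*|(y:ℝ)-(x:ℝ)| + ((y:ℝ)-(x:ℝ))^2)
            = (C * (5*M*|(y:ℝ)-(x:ℝ)| + ((y:ℝ)-(x:ℝ))^2)
                * Real.exp (-(c/2) * |(y:ℝ)-(x:ℝ)|)) * Real.exp (-(c/2) * |(y:ℝ)-(x:ℝ)|) := by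
              ring
          _ ≤ (C * (5*M*|(y:ℝ)-(x:ℝ)| + ((y:ℝ)-(x:ℝ))^2)
                * Real.exp (-(c/2) * |(y:ℝ)-(x:ℝ)|)) * Real.exp (-c*(x:ℝ)/6) :=
              mul_le_mul_of_nonneg_left hb5 hfac
          _ = E y := by simp only [hE]; ring
      linarith
  -- summability of the RHS
  have hsRHS : Summable (fun y : ℤ =>
      g c₁ (x:ℝ) * (Ψ x y * ((y:ℝ)-(x:ℝ)))
      + ((-(Real.exp (-c₁ * (4*(x:ℝ)/3)))) * (Ψ x y * ((y:ℝ)-(x:ℝ))^2) + E y)) :=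
    (hs1.mul_left _).add ((hs2.mul_left _).add hsE)
  -- main tsum estimate
  have hmain := hsLHS.tsum_le_tsum hpt hsRHS
  rw [Summable.tsum_add (hs1.mul_left _) ((hs2.mul_left _).add hsE),
      Summable.tsum_add (hs2.mul_left _) hsE, tsum_mul_left, tsum_mul_left] at hmain
  -- evaluate the E sum
  have hEsum : ∑' y, E y = C * Real.exp (-c*(x:ℝ)/6) * T := by
    simp only [hE]
    rw [tsum_mul_left]
    congr 1
    exact tsum_shift (fun t => Real.exp (-(c/2) * |t|) * (5*M*|t| + t^2)) x
  rw [hEsum] at hmain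
  -- drift bound
  have hD := hdrift x hxx₀
  rw [haX] at hD
  set D := ∑' y : ℤ, Ψ x y * ((y:ℝ) - (x:ℝ)) with hDdef
  -- mean identity
  have hμ : (∑' z : ℤ, Ψ x z * (z:ℝ)) = (x:ℝ) + D := by
    have hstep : ∀ z : ℤ, Ψ x z * (z:ℝ)
        = Ψ x z * ((z:ℝ)-(x:ℝ)) + (x:ℝ) * Ψ x z := by intro z; ring
    calc ∑' z : ℤ, Ψ x z * (z:ℝ)
        = ∑' z : ℤ, (Ψ x z * ((z:ℝ)-(x:ℝ)) + (x:ℝ) * Ψ x z) := by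
          congr 1; funext z; exact hstep z
      _ = D + (x:ℝ) * ∑' z : ℤ, Ψ x z := by
          rw [Summable.tsum_add hs1 (Sp.mul_left _), tsum_mul_left]
      _ = (x:ℝ) + D := by rw [(hstoch x).tsum_eq]; ring
  -- variance lower bound
  set V := ∑' y : ℤ, Ψ x y * ((y:ℝ) - (x:ℝ))^2 with hVdef
  have hvar' := hvar x hxx₀
  rw [hμ] at hvar'
  have hVid : (∑' y : ℤ, Ψ x y * ((y:ℝ) - ((x:ℝ) + D))^2) = V - D^2 := by
    calc ∑' y : ℤ, Ψ x y * ((y:ℝ) - ((x:ℝ) + D))^2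
        = ∑' y : ℤ, (Ψ x y * ((y:ℝ)-(x:ℝ))^2
            + ((-2*D) * (Ψ x y * ((y:ℝ)-(x:ℝ))) + D^2 * Ψ x y)) := by
          congr 1; funext y; ring
      _ = V + ((-2*D) * D + D^2 * ∑' y : ℤ, Ψ x y) := by
          rw [Summable.tsum_add hs2 ((hs1.mul_left _).add (Sp.mul_left _)),
            Summable.tsum_add (hs1.mul_left _) (Sp.mul_left _), tsum_mul_left, tsum_mul_left]
      _ = V - D^2 := by rw [(hstoch x).tsum_eq]; ring
  rw [hVid] at hvar'
  have hVσ : σ^2 ≤ V := by nlinarith [sq_nonneg D]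
  -- final assembly
  have hg0 : 0 < g c₁ (x:ℝ) := g_pos _ _
  have hgM : g c₁ (x:ℝ) ≤ M := g_le_M _ hc₁pos hX0.le
  have hgD : g c₁ (x:ℝ) * D ≤ M * (C * Real.exp (-c * (x:ℝ))) := by
    have h1 : g c₁ (x:ℝ) * D ≤ g c₁ (x:ℝ) * |D| :=
      mul_le_mul_of_nonneg_left (le_abs_self D) hg0.le
    have h2 : g c₁ (x:ℝ) * |D| ≤ M * |D| :=
      mul_le_mul_of_nonneg_right hgM (abs_nonneg _)
    have h3 : M * |D| ≤ M * (C * Real.exp (-c * (x:ℝ))) :=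
      mul_le_mul_of_nonneg_left hD hM0.le
    linarith
  have hκV : -(Real.exp (-c₁ * (4*(x:ℝ)/3))) * V ≤ -(Real.exp (-c₁ * (4*(x:ℝ)/3))) * σ^2 := by
    have := mul_le_mul_of_nonneg_left hVσ (Real.exp_pos (-c₁ * (4*(x:ℝ)/3))).le
    linarith
  have hκeq : Real.exp (-c₁ * (4*(x:ℝ)/3)) = Real.exp (-(c/12) * (x:ℝ)) := by
    rw [hc₁def]; congr 1; ring
  have hexp6 : Real.exp (-c * (x:ℝ)) ≤ Real.exp (-c*(x:ℝ)/6) := by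
    apply Real.exp_le_exp.2
    nlinarith
  have hRx := hR (x:ℝ) hXR
  have hsplit : Real.exp (-c*(x:ℝ)/6)
      = Real.exp (-(c/12) * (x:ℝ)) * Real.exp (-(c/12) * (x:ℝ)) := by
    rw [← Real.exp_add]; ring_nf
  have hfinal : (M*C + C*T) * Real.exp (-c*(x:ℝ)/6) ≤ σ^2 * Real.exp (-(c/12) * (x:ℝ)) := by
    rw [hsplit, ← mul_assoc]
    exact mul_le_mul_of_nonneg_right hRx (Real.exp_pos _).le
  have hMC : M * (C * Real.exp (-c * (x:ℝ))) ≤ M * C * Real.exp (-c*(x:ℝ)/6) := by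
    rw [mul_assoc]
    exact mul_le_mul_of_nonneg_left (mul_le_mul_of_nonneg_left hexp6 hC.le) hM0.le
  rw [hκeq] at hκV
  calc ∑' y : ℤ, Ψ x y * (f c₁ |(y:ℝ)| - f c₁ (x:ℝ))
      ≤ g c₁ (x:ℝ) * D + (-(Real.exp (-c₁ * (4*(x:ℝ)/3))) * V
          + C * Real.exp (-c*(x:ℝ)/6) * T) := hmain
    _ ≤ M * C * Real.exp (-c*(x:ℝ)/6) + (-(Real.exp (-(c/12) * (x:ℝ))) * σ^2
          + C * Real.exp (-c*(x:ℝ)/6) * T) := by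
        rw [hκeq]
        have := hgD
        have := hMC
        linarith [hκV]
    _ ≤ 0 := by nlinarith [hfinal]
  done
end S17

open S17 in
set_option maxHeartbeats 1000000 in
/-- Lyapunov function construction for a Lamperti-type perturbed random walk on `ℤ`:
if the kernel `Ψ` has drift bounded by `C e^{−c|x|}` and conditional variance at least
`σ̃² > 0` outside `[−x₀, x₀]`, and exponentially bounded jumps `Ψ(x,y) ≤ C e^{−c|y−x|}`,
then for `c₁ > 0` small enough and `x₁ ≥ x₀` large enough the function
`f(t) = ∫₀^{|t|} exp((2/c₁) e^{−c₁ s}) ds` is superharmonic for `Ψ` outside `[−x₁, x₁]`. -/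
theorem stmt17 (C c σ x₀ : ℝ) (hC : 0 < C) (hc : 0 < c) (hσ : 0 < σ)
    (Ψ : ℤ → ℤ → ℝ) (hnn : ∀ x y, 0 ≤ Ψ x y) (hstoch : ∀ x, HasSum (Ψ x) 1)
    (hdrift : ∀ x : ℤ, x₀ < |(x : ℝ)| →
      |∑' y : ℤ, Ψ x y * ((y : ℝ) - (x : ℝ))| ≤ C * Real.exp (-c * |(x : ℝ)|))
    (hvar : ∀ x : ℤ, x₀ < |(x : ℝ)| →
      σ ^ 2 ≤ ∑' y : ℤ, Ψ x y * ((y : ℝ) - ∑' z : ℤ, Ψ x z * (z : ℝ)) ^ 2)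
    (hjump : ∀ x y : ℤ, Ψ x y ≤ C * Real.exp (-c * |(y : ℝ) - (x : ℝ)|)) :
    ∃ c₁ x₁ : ℝ, 0 < c₁ ∧ x₀ ≤ x₁ ∧ ∀ x : ℤ, x₁ < |(x : ℝ)| →
      ∑' y : ℤ, Ψ x y *
          ((∫ s in (0:ℝ)..|(y : ℝ)|, Real.exp ((2 / c₁) * Real.exp (-c₁ * s)))
            - ∫ s in (0:ℝ)..|(x : ℝ)|, Real.exp ((2 / c₁) * Real.exp (-c₁ * s)))
        ≤ 0 := by
  obtain ⟨x₁p, hx₁p, hpos⟩ := S17.key C c σ x₀ hC hc hσ Ψ hnn hstoch hdrift hvar hjump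
  set Ψ' : ℤ → ℤ → ℝ := fun a b => Ψ (-a) (-b) with hΨ'
  have hnn' : ∀ a b, 0 ≤ Ψ' a b := fun a b => hnn _ _
  have hstoch' : ∀ a, HasSum (Ψ' a) 1 := fun a =>
    ((Equiv.neg ℤ).hasSum_iff).2 (hstoch (-a))
  have habs : ∀ a : ℤ, |((-a : ℤ) : ℝ)| = |(a:ℝ)| := by
    intro a; push_cast; exact abs_neg _
  have hdrift' : ∀ a : ℤ, x₀ < |(a : ℝ)| →
      |∑' b : ℤ, Ψ' a b * ((b : ℝ) - (a : ℝ))| ≤ C * Real.exp (-c * |(a : ℝ)|) := by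
    intro a ha
    have ha' : x₀ < |((-a : ℤ) : ℝ)| := by rw [habs]; exact ha
    have h0 := hdrift (-a) ha'
    rw [habs] at h0
    have h1 : (∑' b : ℤ, Ψ' a b * ((b : ℝ) - (a : ℝ)))
        = -∑' y : ℤ, Ψ (-a) y * ((y : ℝ) - ((-a : ℤ) : ℝ)) := by
      rw [← (Equiv.neg ℤ).tsum_eq (fun y : ℤ => Ψ (-a) y * ((y : ℝ) - ((-a : ℤ) : ℝ))),
        ← tsum_neg]
      congr 1
      funext b
      simp only [Equiv.neg_apply, hΨ']
      push_cast
      ring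
    rw [h1, abs_neg]
    exact h0
  have hvar' : ∀ a : ℤ, x₀ < |(a : ℝ)| →
      σ ^ 2 ≤ ∑' b : ℤ, Ψ' a b * ((b : ℝ) - ∑' z : ℤ, Ψ' a z * (z : ℝ)) ^ 2 := by
    intro a ha
    have ha' : x₀ < |((-a : ℤ) : ℝ)| := by rw [habs]; exact ha
    have h0 := hvar (-a) ha'
    have hμ : (∑' z : ℤ, Ψ' a z * (z : ℝ)) = -(∑' z : ℤ, Ψ (-a) z * (z : ℝ)) := by
      rw [← (Equiv.neg ℤ).tsum_eq (fun z : ℤ => Ψ (-a) z * (z : ℝ)), ← tsum_neg]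
      congr 1
      funext z
      simp only [Equiv.neg_apply, hΨ']
      push_cast
      ring
    calc σ ^ 2 ≤ ∑' y : ℤ, Ψ (-a) y * ((y : ℝ) - ∑' z : ℤ, Ψ (-a) z * (z : ℝ)) ^ 2 := h0
      _ = ∑' b : ℤ, Ψ' a b * ((b : ℝ) - ∑' z : ℤ, Ψ' a z * (z : ℝ)) ^ 2 := by
          rw [hμ, ← (Equiv.neg ℤ).tsum_eq
            (fun y : ℤ => Ψ (-a) y * ((y : ℝ) - ∑' z : ℤ, Ψ (-a) z * (z : ℝ)) ^ 2)]
          congr 1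
          funext b
          simp only [Equiv.neg_apply, hΨ']
          push_cast
          ring
  have hjump'' : ∀ a b : ℤ, Ψ' a b ≤ C * Real.exp (-c * |(b : ℝ) - (a : ℝ)|) := by
    intro a b
    have := hjump (-a) (-b)
    simp only [hΨ']
    convert this using 3
    push_cast
    rw [show -(b:ℝ) - -(a:ℝ) = -((b:ℝ) - (a:ℝ)) by ring, abs_neg]
  obtain ⟨x₁n, hx₁n, hneg⟩ := S17.key C c σ x₀ hC hc hσ Ψ' hnn' hstoch' hdrift' hvar' hjump''
  refine ⟨c/16, max x₁p x₁n, by positivity, ?_, ?_⟩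
  · calc x₀ ≤ max x₀ 1 := le_max_left _ _
      _ ≤ x₁p := hx₁p
      _ ≤ max x₁p x₁n := le_max_left _ _
  intro x hx
  have hgoal : ∑' y : ℤ, Ψ x y * (f (c/16) |(y:ℝ)| - f (c/16) |(x:ℝ)|) ≤ 0 := by
    rcases le_or_gt 0 ((x:ℝ)) with hx0 | hx0
    · rw [abs_of_nonneg hx0] at hx
      exact hpos x (lt_of_le_of_lt (le_max_left _ _) hx)
    · rw [abs_of_neg hx0] at hx
      have hxneg : x₁n < ((-x : ℤ) : ℝ) := by
        push_cast
        exact lt_of_le_of_lt (le_max_right _ _) hx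
      have h := hneg (-x) hxneg
      have htrans : ∑' y : ℤ, Ψ x y * (f (c/16) |(y:ℝ)| - f (c/16) |(x:ℝ)|)
          = ∑' b : ℤ, Ψ' (-x) b * (f (c/16) |(b:ℝ)| - f (c/16) |((-x : ℤ):ℝ)|) := by
        rw [← (Equiv.neg ℤ).tsum_eq
          (fun b : ℤ => Ψ' (-x) b * (f (c/16) |(b:ℝ)| - f (c/16) |((-x : ℤ):ℝ)|))]
        congr 1
        funext y
        simp only [Equiv.neg_apply, hΨ', neg_neg, habs]
      rw [htrans]
      exact h
  exact hgoal
end
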